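/- arXiv:2409.20495 — 4 statements merged into one kernel-verified Lean document; each statement's English description precedes it below -/
import Mathlib

section
/- Let G be a nontrivial finite abelian group, n ≥ 1, let (σ,ρ) be a double partition of n, let H be the stabiliser in W = G ≀ S_n of some fixed (σ,ρ)-tabloid, and let Y be a nonempty subset of W that is a (σ,ρ)-clique, i.e., for all distinct x, y ∈ Y the element x⁻¹y stabilises no (σ,ρ)-tabloid. Then |Y|·|H| ≤ |W|, and equality holds if and only if Y is (σ,ρ)-transitive; moreover, in case of equality Y is sharply (σ,ρ)-transitive (the transitivity constant is 1). -/
/-- The monoid hom `Perm (Fin n) →* MulAut (Fin n → G)`, permuting coordinates. -/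
def permMulAut (G : Type*) [CommGroup G] (n : ℕ) :
    Equiv.Perm (Fin n) →* MulAut (Fin n → G) where
  toFun π := MulEquiv.arrowCongr π (MulEquiv.refl G)
  map_one' := by ext f a; rfl
  map_mul' := by intro π σ; ext f a; rfl

/-- The wreath product `G ≀ Sₙ`. -/
abbrev Wr (G : Type*) [CommGroup G] (n : ℕ) :=
  SemidirectProduct (Fin n → G) (Equiv.Perm (Fin n)) (permMulAut G n)

/-- The natural action of `G ≀ Sₙ` on `G × [n]`. -/
def wAct {G : Type*} [CommGroup G] {n : ℕ} (w : Wr G n) (p : G × Fin n) : G × Fin n :=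
  (p.1 * w.left (w.right p.2), w.right p.2)

/-- The `i`-th largest part of a multiset of naturals (0-indexed; `0` beyond the last part). -/
def dparts (s : Multiset ℕ) (i : ℕ) : ℕ := ((s.sort (· ≤ ·)).reverse).getD i 0

/-- `s` is dominated by `t`. -/
def msDom (s t : Multiset ℕ) : Prop :=
  ∀ k, (((s.sort (· ≤ ·)).reverse).take k).sum ≤ (((t.sort (· ≤ ·)).reverse).take k).sum

/-- `T` is a `(σ,ρ)`-tabloid: the first component assigns to each element of `[n]` a block
(`Sum.inl i` is the block of the `i+1`-st largest part of `σ`, `Sum.inr j` that of `ρ`),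
blocks have the prescribed sizes, and the colouring (second component)
is normalised to `1` on the `ρ`-blocks. -/
def IsTabloid (G : Type*) [CommGroup G] (n : ℕ) (σ ρ : Multiset ℕ)
    (T : (Fin n → ℕ ⊕ ℕ) × (Fin n → G)) : Prop :=
  (∀ i, Nat.card {a : Fin n // T.1 a = Sum.inl i} = dparts σ i) ∧
  (∀ j, Nat.card {a : Fin n // T.1 a = Sum.inr j} = dparts ρ j) ∧
  (∀ a j, T.1 a = Sum.inr j → T.2 a = 1)

/-- The action of the wreath product on (raw) tabloids. -/
def tabAct {G : Type*} [CommGroup G] {n : ℕ} (w : Wr G n)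
    (T : (Fin n → ℕ ⊕ ℕ) × (Fin n → G)) : (Fin n → ℕ ⊕ ℕ) × (Fin n → G) :=
  ⟨fun a => T.1 (w.right⁻¹ a),
   fun a => match T.1 (w.right⁻¹ a) with
     | Sum.inl _ => T.2 (w.right⁻¹ a) * w.left a
     | Sum.inr _ => 1⟩

/-- A subset `Y` of `W` is transitive on `S ⊆ Ω` (w.r.t. an action `act`): there is a
constant `c > 0` such that any `a ∈ S` is mapped to any `b ∈ S` by exactly `c` elements of `Y`. -/
def IsTransitiveOn {W Ω : Type*} (act : W → Ω → Ω) (S : Set Ω) (Y : Set W) : Prop :=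
  ∃ c : ℕ, 0 < c ∧ ∀ a ∈ S, ∀ b ∈ S, Nat.card {y : W // y ∈ Y ∧ act y a = b} = c

/-- `Y ⊆ G ≀ Sₙ` is `(σ,ρ)`-transitive. -/
def DPTransitive (G : Type*) [CommGroup G] (n : ℕ) (σ ρ : Multiset ℕ)
    (Y : Set (Wr G n)) : Prop :=
  IsTransitiveOn tabAct {T | IsTabloid G n σ ρ T} Y

/-- `(σ,ρ) ≽_G (τ,π)` : every `(σ,ρ)`-transitive subset of `G ≀ Sₙ` is `(τ,π)`-transitive. -/
def DPDom (G : Type*) [CommGroup G] (n : ℕ) (σ ρ τ π : Multiset ℕ) : Prop :=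
  ∀ Y : Set (Wr G n), DPTransitive G n σ ρ Y → DPTransitive G n τ π Y

/-- The partition obtained by adding `k` to the `r`-th largest part (1-indexed). -/
def addPart (s : Multiset ℕ) (r k : ℕ) : Multiset ℕ :=
  s.erase (dparts s (r - 1)) + {dparts s (r - 1) + k}

/-!
The clique condition says exactly that, for every tabloid `T`, the orbit map `y ↦ y • T` is
injective on `Y`; hence `|Y| ≤ |Ω|` for the set `Ω` of `(σ,ρ)`-tabloids. Since `W` acts
transitively on `Ω`, orbit–stabiliser gives `|W| = |Ω|·|H|`, so `|Y|·|H| ≤ |W|` with equality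
iff `|Y| = |Ω|`, i.e. iff every orbit map is a bijection `Y → Ω`, which is sharp transitivity.
Conversely, transitivity with any constant `c > 0` makes the orbit maps surjective.
-/

instance SemidirectProduct.instFinite {N H : Type*} [Group N] [Group H] {φ : H →* MulAut N}
    [Finite N] [Finite H] : Finite (N ⋊[φ] H) :=
  Finite.of_equiv _ SemidirectProduct.equivProd.symm

namespace MulAction

variable {W Ω : Type*} [Group W] [MulAction W Ω] {Y : Set W}

theorem injOn_smul_of_forall_smul_ne
    (hY : ∀ x ∈ Y, ∀ y ∈ Y, x ≠ y → ∀ ω : Ω, (x⁻¹ * y) • ω ≠ ω) (ω : Ω) :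
    Set.InjOn (· • ω) Y := by
  intro x hx y hy (hxy : x • ω = y • ω)
  by_contra hne
  exact hY x hx y hy hne ω (by rw [mul_smul, ← hxy, inv_smul_smul])

variable (W) in
theorem card_eq_card_mul_card_stabilizer [Finite W] [IsPretransitive W Ω] (ω : Ω) :
    Nat.card W = Nat.card Ω * Nat.card (stabilizer W ω) := by
  rw [← index_stabilizer_of_transitive W ω, Subgroup.index_mul_card]

theorem mul_card_stabilizer_eq_card_iff [Finite W] [IsPretransitive W Ω] (ω : Ω) (k : ℕ) :
    k * Nat.card (stabilizer W ω) = Nat.card W ↔ k = Nat.card Ω := by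
  rw [card_eq_card_mul_card_stabilizer W ω]
  exact Nat.mul_left_inj Nat.card_pos.ne'

variable [Finite Ω] (hY : ∀ ω : Ω, Set.InjOn (· • ω) Y)
include hY

theorem card_le_card_of_injOn_smul (ω : Ω) : Nat.card Y ≤ Nat.card Ω :=
  Nat.card_le_card_of_injective _ (hY ω).injective

theorem card_smul_eq_eq_one_of_card_eq (hcard : Nat.card Y = Nat.card Ω) (a b : Ω) :
    Nat.card {y : W // y ∈ Y ∧ y • a = b} = 1 := by
  have hbij := (Nat.bijective_iff_injective_and_card _).mpr ⟨(hY a).injective, hcard⟩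
  obtain ⟨⟨y, hy⟩, hyb⟩ := hbij.2 b
  refine Nat.card_eq_one_iff_unique.mpr ⟨⟨fun y₁ y₂ => ?_⟩, ⟨⟨y, hy, hyb⟩⟩⟩
  exact Subtype.ext (hY a y₁.2.1 y₂.2.1 (y₁.2.2.trans y₂.2.2.symm))

theorem isTransitiveOn_univ_iff_card_eq [Nonempty Ω] :
    IsTransitiveOn (fun (w : W) (ω : Ω) => w • ω) Set.univ Y ↔ Nat.card Y = Nat.card Ω := by
  refine ⟨fun ⟨c, hc, hYc⟩ => ?_, fun hcard =>
    ⟨1, one_pos, fun a _ b _ => card_smul_eq_eq_one_of_card_eq hY hcard a b⟩⟩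
  obtain ⟨ω⟩ := ‹Nonempty Ω›
  have hsurj : Function.Surjective (fun y : Y => y.1 • ω) := fun b => by
    obtain ⟨⟨y, hy, hyb⟩⟩ := (Nat.card_pos_iff.mp ((hYc ω trivial b trivial).symm ▸ hc)).1
    exact ⟨⟨y, hy⟩, hyb⟩
  exact Nat.card_congr (Equiv.ofBijective _ ⟨(hY ω).injective, hsurj⟩)

theorem card_mul_card_stabilizer_le [Finite W] [IsPretransitive W Ω] (ω : Ω) :
    Nat.card Y * Nat.card (stabilizer W ω) ≤ Nat.card W := by
  rw [card_eq_card_mul_card_stabilizer W ω]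
  exact Nat.mul_le_mul_right _ (card_le_card_of_injOn_smul hY ω)

end MulAction

section TabloidAction

variable {G : Type*} [CommGroup G] {n : ℕ}

theorem tabAct_mul (w w' : Wr G n) (T : (Fin n → ℕ ⊕ ℕ) × (Fin n → G)) :
    tabAct (w * w') T = tabAct w (tabAct w' T) := by
  ext a
  · rfl
  · simp only [tabAct, SemidirectProduct.mul_left, SemidirectProduct.mul_right, mul_inv_rev,
      Equiv.Perm.mul_apply, Pi.mul_apply]
    rcases T.1 (w'.right⁻¹ (w.right⁻¹ a)) with i | j
    · simp [permMulAut, mul_assoc, mul_comm]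
    · rfl

theorem tabAct_one {T : (Fin n → ℕ ⊕ ℕ) × (Fin n → G)}
    (hT : ∀ a j, T.1 a = Sum.inr j → T.2 a = 1) :
    tabAct (1 : Wr G n) T = T := by
  ext a
  · rfl
  · show (match T.1 a with | Sum.inl _ => T.2 a * 1 | Sum.inr _ => 1) = T.2 a
    rcases h : T.1 a with i | j
    · exact mul_one _
    · exact (hT a j h).symm

variable {σ ρ : Multiset ℕ}

theorem isTabloid_tabAct (w : Wr G n) {T : (Fin n → ℕ ⊕ ℕ) × (Fin n → G)}
    (hT : IsTabloid G n σ ρ T) : IsTabloid G n σ ρ (tabAct w T) := by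
  have hfib : ∀ v, Nat.card {a // (tabAct w T).1 a = v} = Nat.card {a // T.1 a = v} := fun v =>
    Nat.card_congr (Equiv.subtypeEquiv w.right⁻¹ fun _ => Iff.rfl)
  refine ⟨fun i => (hfib _).trans (hT.1 i), fun j => (hfib _).trans (hT.2.1 j), ?_⟩
  intro a j (h : T.1 (w.right⁻¹ a) = Sum.inr j)
  simp only [tabAct, h]

theorem exists_tabAct_eq {T T' : (Fin n → ℕ ⊕ ℕ) × (Fin n → G)}
    (hT : IsTabloid G n σ ρ T) (hT' : IsTabloid G n σ ρ T') :
    ∃ w : Wr G n, tabAct w T = T' := by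
  classical
  have hfib : ∀ v, Fintype.card {a // T.1 a = v} = Fintype.card {a // T'.1 a = v} := by
    rintro (i | j)
    · simp only [← Nat.card_eq_fintype_card, hT.1 i, hT'.1 i]
    · simp only [← Nat.card_eq_fintype_card, hT.2.1 j, hT'.2.1 j]
  -- a permutation carrying each block of `T` onto the corresponding block of `T'`
  let π : Equiv.Perm (Fin n) := (Equiv.sigmaFiberEquiv T.1).symm.trans <|
    (Equiv.sigmaCongrRight fun v => Fintype.equivOfCardEq (hfib v)).trans
      (Equiv.sigmaFiberEquiv T'.1)
  have hπ_apply : ∀ a, T'.1 (π a) = T.1 a := fun a => (Fintype.equivOfCardEq (hfib _) ⟨a, rfl⟩).2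
  have hπ : ∀ a, T.1 (π⁻¹ a) = T'.1 a := fun a => by simpa using (hπ_apply (π⁻¹ a)).symm
  refine ⟨⟨fun a => (T.2 (π⁻¹ a))⁻¹ * T'.2 a, π⟩, Prod.ext (funext hπ) (funext fun a => ?_)⟩
  show (match T.1 (π⁻¹ a) with
    | Sum.inl _ => T.2 (π⁻¹ a) * ((T.2 (π⁻¹ a))⁻¹ * T'.2 a)
    | Sum.inr _ => 1) = T'.2 a
  rcases h : T.1 (π⁻¹ a) with i | j
  · exact mul_inv_cancel_left _ _
  · exact (hT'.2.2 a j ((hπ a).symm.trans h)).symm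

variable (G n σ ρ) in
abbrev Tabloid := {T : (Fin n → ℕ ⊕ ℕ) × (Fin n → G) // IsTabloid G n σ ρ T}

instance : MulAction (Wr G n) (Tabloid G n σ ρ) where
  smul w T := ⟨tabAct w T.1, isTabloid_tabAct w T.2⟩
  one_smul T := Subtype.ext (tabAct_one T.2.2.2)
  mul_smul w w' T := Subtype.ext (tabAct_mul w w' T.1)

theorem Tabloid.smul_mk_eq_mk_iff {w : Wr G n} {T T' : (Fin n → ℕ ⊕ ℕ) × (Fin n → G)}
    {hT : IsTabloid G n σ ρ T} {hT' : IsTabloid G n σ ρ T'} :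
    w • (⟨T, hT⟩ : Tabloid G n σ ρ) = ⟨T', hT'⟩ ↔ tabAct w T = T' :=
  Subtype.ext_iff

instance : MulAction.IsPretransitive (Wr G n) (Tabloid G n σ ρ) where
  exists_smul_eq := fun ⟨_, hT⟩ ⟨_, hT'⟩ =>
    (exists_tabAct_eq hT hT').imp fun _ => Tabloid.smul_mk_eq_mk_iff.mpr

theorem dpTransitive_iff_isTransitiveOn_univ {Y : Set (Wr G n)} :
    DPTransitive G n σ ρ Y ↔
      IsTransitiveOn (fun (w : Wr G n) (T : Tabloid G n σ ρ) => w • T) Set.univ Y := by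
  simp only [DPTransitive, IsTransitiveOn, Set.mem_univ, forall_const, Subtype.forall,
    Tabloid.smul_mk_eq_mk_iff]
  rfl

theorem card_stabilizer_tabloid {T₀ : (Fin n → ℕ ⊕ ℕ) × (Fin n → G)}
    (hT₀ : IsTabloid G n σ ρ T₀) :
    Nat.card {w : Wr G n | tabAct w T₀ = T₀} =
      Nat.card (MulAction.stabilizer (Wr G n) (⟨T₀, hT₀⟩ : Tabloid G n σ ρ)) :=
  Nat.card_congr (Equiv.subtypeEquivRight fun _ => Tabloid.smul_mk_eq_mk_iff.symm)

end TabloidAction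

theorem clique_bound_general (G : Type) [CommGroup G] [Fintype G]
    (n : ℕ) (σ ρ : Multiset ℕ)
    (T₀ : (Fin n → ℕ ⊕ ℕ) × (Fin n → G)) (hT₀ : IsTabloid G n σ ρ T₀)
    (Y : Set (Wr G n))
    (hclique : ∀ x ∈ Y, ∀ y ∈ Y, x ≠ y →
      ∀ T, IsTabloid G n σ ρ T → tabAct (x⁻¹ * y) T ≠ T) :
    Nat.card Y * Nat.card {w : Wr G n | tabAct w T₀ = T₀} ≤ Nat.card (Wr G n) ∧
    (Nat.card Y * Nat.card {w : Wr G n | tabAct w T₀ = T₀} = Nat.card (Wr G n) ↔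
      DPTransitive G n σ ρ Y) ∧
    (Nat.card Y * Nat.card {w : Wr G n | tabAct w T₀ = T₀} = Nat.card (Wr G n) →
      ∀ a, IsTabloid G n σ ρ a → ∀ b, IsTabloid G n σ ρ b →
        Nat.card {y : Wr G n // y ∈ Y ∧ tabAct y a = b} = 1) := by
  let ω₀ : Tabloid G n σ ρ := ⟨T₀, hT₀⟩
  have : Nonempty (Tabloid G n σ ρ) := ⟨ω₀⟩
  have : Finite (Tabloid G n σ ρ) :=
    Finite.of_surjective _ (MulAction.surjective_smul (Wr G n) ω₀)
  have hinj : ∀ T : Tabloid G n σ ρ, Set.InjOn (· • T) Y :=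
    MulAction.injOn_smul_of_forall_smul_ne fun x hx y hy hxy ⟨T, hT⟩ h =>
      hclique x hx y hy hxy T hT (Tabloid.smul_mk_eq_mk_iff.mp h)
  rw [card_stabilizer_tabloid hT₀, dpTransitive_iff_isTransitiveOn_univ,
    MulAction.isTransitiveOn_univ_iff_card_eq hinj,
    MulAction.mul_card_stabilizer_eq_card_iff ω₀]
  refine ⟨MulAction.card_mul_card_stabilizer_le hinj ω₀, Iff.rfl, fun hcard a ha b hb => ?_⟩
  rw [← MulAction.card_smul_eq_eq_one_of_card_eq hinj hcard ⟨a, ha⟩ ⟨b, hb⟩]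
  exact Nat.card_congr (Equiv.subtypeEquivRight fun _ => and_congr_right_iff.mpr fun _ =>
    Tabloid.smul_mk_eq_mk_iff.symm)

/-- **Clique bound (Theorem on `(σ,ρ)`-cliques).**
Let `G` be a nontrivial finite abelian group, `(σ,ρ)` a double partition of `n ≥ 1`,
`H` the stabiliser in `W = G ≀ Sₙ` of a fixed `(σ,ρ)`-tabloid `T₀`, and `Y` a nonempty
`(σ,ρ)`-clique in `W` (no quotient `x⁻¹y` of distinct elements of `Y` stabilises any
`(σ,ρ)`-tabloid).  Then `|Y|·|H| ≤ |W|`; equality holds iff `Y` is `(σ,ρ)`-transitive;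
and in case of equality `Y` is sharply `(σ,ρ)`-transitive. -/
theorem clique_bound (G : Type) [CommGroup G] [Fintype G] [Nontrivial G]
    (n : ℕ) (hn : 1 ≤ n) (σ ρ : Multiset ℕ) (hσ0 : 0 ∉ σ) (hρ0 : 0 ∉ ρ)
    (hsum : σ.sum + ρ.sum = n)
    (T₀ : (Fin n → ℕ ⊕ ℕ) × (Fin n → G)) (hT₀ : IsTabloid G n σ ρ T₀)
    (Y : Set (Wr G n)) (hY : Y.Nonempty)
    (hclique : ∀ x ∈ Y, ∀ y ∈ Y, x ≠ y →
      ∀ T, IsTabloid G n σ ρ T → tabAct (x⁻¹ * y) T ≠ T) :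
    Nat.card Y * Nat.card {w : Wr G n | tabAct w T₀ = T₀} ≤ Nat.card (Wr G n) ∧
    (Nat.card Y * Nat.card {w : Wr G n | tabAct w T₀ = T₀} = Nat.card (Wr G n) ↔
      DPTransitive G n σ ρ Y) ∧
    (Nat.card Y * Nat.card {w : Wr G n | tabAct w T₀ = T₀} = Nat.card (Wr G n) →
      ∀ a, IsTabloid G n σ ρ a → ∀ b, IsTabloid G n σ ρ b →
        Nat.card {y : Wr G n // y ∈ Y ∧ tabAct y a = b} = 1) :=
  clique_bound_general G n σ ρ T₀ hT₀ Y hclique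
end

section
/- Let G be a nontrivial finite abelian group and let (σ,ρ) be a double partition. Then for every integer partition α, (σ∪α, ρ) ≽_G (σ, ρ∪α), both being double partitions of n = |σ| + |ρ| + |α|. -/
/-!
Adding the parts of `α` one at a time, it suffices to move a single block of size `x` from
the uncoloured side to the coloured side: `(x :: σ, ρ) ≽_G (σ, x :: ρ)`. Relabel the blocks so
that the block of size `x` in `x :: ρ` becomes the one in `x :: σ`; a `(σ, x :: ρ)`-tabloid `B`
then lifts to the `(x :: σ, ρ)`-tabloids obtained by colouring that block with any
`g : block → G`. An element `y` maps `A` to `B` exactly when it maps the lift of `A` (coloured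
by `1`) to the lift of `B` coloured by the colours `y` produces on the block. Summing over the
`|G| ^ x` colourings, each contributing the constant `c` of `(x :: σ, ρ)`-transitivity, shows
that `(σ, x :: ρ)`-transitivity holds with constant `|G| ^ x * c`.
-/

theorem DPDom.trans {G : Type*} [CommGroup G] {n : ℕ} {σ₁ ρ₁ σ₂ ρ₂ σ₃ ρ₃ : Multiset ℕ}
    (h₁₂ : DPDom G n σ₁ ρ₁ σ₂ ρ₂) (h₂₃ : DPDom G n σ₂ ρ₂ σ₃ ρ₃) : DPDom G n σ₁ ρ₁ σ₃ ρ₃ :=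
  fun Y hY => h₂₃ Y (h₁₂ Y hY)

namespace DoublePartition

def insertNoneAt (r : ℕ) : Option ℕ ≃ ℕ where
  toFun o := o.elim r fun i => if i < r then i else i + 1
  invFun j := if j < r then some j else if j = r then none else some (j - 1)
  left_inv := by
    rintro (_ | i)
    · simp
    · by_cases h : i < r
      · simp [h]
      · simp [h, show ¬ i + 1 < r by omega, show i + 1 ≠ r by omega]
  right_inv j := by
    by_cases h : j < r
    · simp [h]
    · rcases eq_or_ne j r with rfl | h'
      · simp
      · simp [h, h', show ¬ j - 1 < r by omega, show j - 1 + 1 = j by omega]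

theorem insertNoneAt_none (r : ℕ) : insertNoneAt r none = r := rfl

theorem insertNoneAt_some_ne (r i : ℕ) : insertNoneAt r (some i) ≠ r :=
  (insertNoneAt r).injective.ne (Option.some_ne_none i)

theorem sort_cons_eq_orderedInsert (x : ℕ) (s : Multiset ℕ) :
    (x ::ₘ s).sort (· ≤ ·) = (s.sort (· ≤ ·)).orderedInsert (· ≤ ·) x := by
  refine List.Perm.eq_of_pairwise' (Multiset.pairwise_sort _ _)
    ((Multiset.pairwise_sort s _).orderedInsert x _) ?_
  refine List.Perm.trans ?_ (List.perm_orderedInsert (· ≤ ·) x _).symm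
  rw [← Multiset.coe_eq_coe, Multiset.sort_eq, ← Multiset.cons_coe, Multiset.sort_eq]

theorem exists_dparts_cons (x : ℕ) (s : Multiset ℕ) :
    ∃ r, ∀ o, dparts (x ::ₘ s) (insertNoneAt r o) = o.elim x (dparts s) := by
  set L := s.sort (· ≤ ·)
  set T := L.takeWhile fun b => decide ¬ x ≤ b
  set D := L.dropWhile fun b => decide ¬ x ≤ b
  have hL : L.reverse = D.reverse ++ T.reverse := by
    rw [← List.reverse_append, List.takeWhile_append_dropWhile]
  have hxL : ((x ::ₘ s).sort (· ≤ ·)).reverse = D.reverse ++ x :: T.reverse := by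
    rw [sort_cons_eq_orderedInsert, List.orderedInsert_eq_take_drop]; simp [T, D, L]
  refine ⟨D.length, ?_⟩
  rintro (_ | i)
  · simp [dparts, insertNoneAt, hxL]
  · simp only [dparts, insertNoneAt, Equiv.coe_fn_mk, Option.elim_some, hxL]
    change _ = L.reverse.getD i 0
    rw [hL, ← List.length_reverse (as := D)]
    split_ifs with h
    · rw [List.getD_append _ _ _ _ h, List.getD_append _ _ _ _ h]
    · rw [List.getD_append_right _ _ _ _ (by omega), List.getD_append_right _ _ _ _ (by omega),
        show i + 1 - D.reverse.length = i - D.reverse.length + 1 by omega, List.getD_cons_succ]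

@[simps]
def sumOptionEquivOptionSum (α β : Type*) : α ⊕ Option β ≃ Option α ⊕ β where
  toFun := Sum.elim (Sum.inl ∘ some) fun o => o.elim (Sum.inl none) Sum.inr
  invFun := Sum.elim (fun o => o.elim (Sum.inr none) Sum.inl) (Sum.inr ∘ some)
  left_inv := by rintro (_ | _ | _) <;> rfl
  right_inv := by rintro ((_ | _) | _) <;> rfl

/-- Sends the block `Sum.inr rρ` to `Sum.inl rσ` and shifts the other indices to match
`exists_dparts_cons`. -/
def moveBlock (rσ rρ : ℕ) : ℕ ⊕ ℕ ≃ ℕ ⊕ ℕ :=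
  ((Equiv.refl ℕ).sumCongr (insertNoneAt rρ).symm).trans <|
    (sumOptionEquivOptionSum ℕ ℕ).trans ((insertNoneAt rσ).sumCongr (Equiv.refl ℕ))

theorem isLeft_moveBlock (rσ rρ : ℕ) (k : ℕ ⊕ ℕ) :
    (moveBlock rσ rρ k).isLeft ↔ k.isLeft ∨ k = Sum.inr rρ := by
  rcases k with i | j
  · simp [moveBlock]
  · obtain ⟨o, rfl⟩ := (insertNoneAt rρ).surjective j
    rcases o with _ | j'
    · simpa [moveBlock] using insertNoneAt_none rρ
    · simp [moveBlock, insertNoneAt_some_ne]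

def blockSize (σ ρ : Multiset ℕ) : ℕ ⊕ ℕ → ℕ := Sum.elim (dparts σ) (dparts ρ)

theorem blockSize_moveBlock {x rσ rρ : ℕ} {σ ρ : Multiset ℕ}
    (hσ : ∀ o, dparts (x ::ₘ σ) (insertNoneAt rσ o) = o.elim x (dparts σ))
    (hρ : ∀ o, dparts (x ::ₘ ρ) (insertNoneAt rρ o) = o.elim x (dparts ρ))
    (k : ℕ ⊕ ℕ) :
    blockSize (x ::ₘ σ) ρ (moveBlock rσ rρ k) = blockSize σ (x ::ₘ ρ) k := by
  rcases k with i | j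
  · simpa [moveBlock, blockSize] using hσ (some i)
  · obtain ⟨o, rfl⟩ := (insertNoneAt rρ).surjective j
    rcases o with _ | j' <;> simp [moveBlock, blockSize, hσ, hρ]

instance {G : Type*} [CommGroup G] [Finite G] (n : ℕ) : Finite (Wr G n) :=
  Finite.of_injective (fun w : Wr G n => (w.left, w.right))
    fun _ _ h => SemidirectProduct.ext (congrArg Prod.fst h) (congrArg Prod.snd h)

abbrev RawTabloid (G : Type*) (n : ℕ) := (Fin n → ℕ ⊕ ℕ) × (Fin n → G)

section Relabel

variable {G : Type*} [CommGroup G] {n : ℕ}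

theorem isTabloid_iff {σ ρ : Multiset ℕ} {T : RawTabloid G n} :
    IsTabloid G n σ ρ T ↔
      (∀ k, Nat.card {a // T.1 a = k} = blockSize σ ρ k) ∧ ∀ a j, T.1 a = Sum.inr j → T.2 a = 1 :=
  ⟨fun ⟨hl, hr, h1⟩ => ⟨Sum.rec hl hr, h1⟩, fun ⟨h, h1⟩ => ⟨(h <| .inl ·), (h <| .inr ·), h1⟩⟩

theorem tabAct_snd_of_inl {w : Wr G n} {T : RawTabloid G n} {a : Fin n} {i : ℕ}
    (h : T.1 (w.right⁻¹ a) = Sum.inl i) : (tabAct w T).2 a = T.2 (w.right⁻¹ a) * w.left a := by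
  simp only [tabAct, h]

theorem tabAct_snd_of_inr {w : Wr G n} {T : RawTabloid G n} {a : Fin n} {j : ℕ}
    (h : T.1 (w.right⁻¹ a) = Sum.inr j) : (tabAct w T).2 a = 1 := by
  simp only [tabAct, h]

def relabel (e : ℕ ⊕ ℕ ≃ ℕ ⊕ ℕ) (r : ℕ) (T : RawTabloid G n) (g : Fin n → G) : RawTabloid G n :=
  (e ∘ T.1, fun a => if T.1 a = Sum.inr r then g a else T.2 a)

variable {e : ℕ ⊕ ℕ ≃ ℕ ⊕ ℕ} {r : ℕ}

theorem relabel_eq_relabel_iff {T T' : RawTabloid G n} {g g' : Fin n → G}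
    (hT : ∀ a, T.1 a = Sum.inr r → T.2 a = 1) (hT' : ∀ a, T'.1 a = Sum.inr r → T'.2 a = 1) :
    relabel e r T g = relabel e r T' g' ↔ T = T' ∧ ∀ a, T.1 a = Sum.inr r → g a = g' a := by
  constructor
  · intro h
    have h1 : T.1 = T'.1 := funext fun a => e.injective (congrFun (congrArg Prod.fst h) a)
    have h2 a := congrFun (congrArg Prod.snd h) a
    refine ⟨Prod.ext h1 (funext fun a => ?_), fun a ha => ?_⟩
    · by_cases ha : T.1 a = Sum.inr r
      · rw [hT a ha, hT' a (h1 ▸ ha)]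
      · simpa [relabel, ha, ← h1] using h2 a
    · simpa [relabel, ha, ← h1] using h2 a
  · rintro ⟨rfl, hg⟩
    refine Prod.ext rfl (funext fun a => ?_)
    simp only [relabel]
    split_ifs with ha
    exacts [hg a ha, rfl]

theorem tabAct_relabel (he : ∀ k, (e k).isLeft ↔ k.isLeft ∨ k = Sum.inr r)
    (w : Wr G n) (T : RawTabloid G n) (g : Fin n → G) :
    tabAct w (relabel e r T g) = relabel e r (tabAct w T) (tabAct w (relabel e r T g)).2 := by
  refine Prod.ext rfl (funext fun a => ?_)
  simp only [relabel]
  split_ifs with ha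
  · rfl
  rcases hk : T.1 (w.right⁻¹ a) with i | j
  · obtain ⟨i', hi'⟩ := Sum.isLeft_iff.mp ((he (Sum.inl i)).2 (Or.inl rfl))
    rw [tabAct_snd_of_inl (i := i') ((congrArg e hk).trans hi'), tabAct_snd_of_inl hk]
    change (if T.1 (w.right⁻¹ a) = _ then _ else _) * _ = _
    rw [hk, if_neg Sum.inl_ne_inr]
  · have hj : ¬ (e (Sum.inr j)).isLeft := by
      have : Sum.inr j ≠ Sum.inr r := hk ▸ ha
      simpa [he] using this
    obtain ⟨j', hj'⟩ := Sum.isRight_iff.mp (Sum.not_isLeft.mp hj)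
    rw [tabAct_snd_of_inr (j := j') ((congrArg e hk).trans hj'), tabAct_snd_of_inr hk]

theorem isTabloid_relabel {σ ρ σ' ρ' : Multiset ℕ}
    (he : ∀ k, (e k).isLeft ↔ k.isLeft ∨ k = Sum.inr r)
    (hsize : ∀ k, blockSize σ' ρ' (e k) = blockSize σ ρ k) {T : RawTabloid G n}
    (hT : IsTabloid G n σ ρ T) (g : Fin n → G) : IsTabloid G n σ' ρ' (relabel e r T g) := by
  rw [isTabloid_iff] at hT ⊢
  refine ⟨fun k => ?_, fun a j ha => ?_⟩
  · calc Nat.card {a // e (T.1 a) = k} = Nat.card {a // T.1 a = e.symm k} :=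
          Nat.card_congr (Equiv.subtypeEquivRight fun _ => e.eq_symm_apply.symm)
      _ = blockSize σ' ρ' k := by rw [hT.1, ← hsize, e.apply_symm_apply]
  · have hl : ¬ (T.1 a).isLeft ∧ T.1 a ≠ Sum.inr r := by
      simpa [he] using (show ¬ (e (T.1 a)).isLeft by simp [show e (T.1 a) = Sum.inr j from ha])
    obtain ⟨j', hj'⟩ := Sum.isRight_iff.mp (Sum.not_isLeft.mp hl.1)
    simp only [relabel, if_neg hl.2]
    exact hT.2 a j' hj'

theorem tabAct_relabel_eq_relabel_iff (he : ∀ k, (e k).isLeft ↔ k.isLeft ∨ k = Sum.inr r)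
    {w : Wr G n} {A B : RawTabloid G n} {g h : Fin n → G}
    (hB : ∀ a, B.1 a = Sum.inr r → B.2 a = 1) :
    tabAct w (relabel e r A g) = relabel e r B h ↔
      tabAct w A = B ∧ ∀ a, B.1 a = Sum.inr r → (tabAct w (relabel e r A g)).2 a = h a := by
  rw [tabAct_relabel he, relabel_eq_relabel_iff (fun _ => tabAct_snd_of_inr) hB]
  refine and_congr_right fun hAB => ?_
  subst hAB
  simp +contextual [relabel]

end Relabel

theorem dpDom_of_relabel {G : Type*} [CommGroup G] [Finite G] {n : ℕ} {σ ρ σ' ρ' : Multiset ℕ}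
    {e : ℕ ⊕ ℕ ≃ ℕ ⊕ ℕ} {r : ℕ} (he : ∀ k, (e k).isLeft ↔ k.isLeft ∨ k = Sum.inr r)
    (hsize : ∀ k, blockSize σ' ρ' (e k) = blockSize σ ρ k) : DPDom G n σ' ρ' σ ρ := by
  classical
  have := Fintype.ofFinite G
  rintro Y ⟨c, hc, hY⟩
  refine ⟨Nat.card G ^ blockSize σ ρ (Sum.inr r) * c, Nat.mul_pos (Nat.pow_pos Nat.card_pos) hc,
    fun A hA B hB => ?_⟩
  rw [Set.mem_ofPred_eq, isTabloid_iff] at hA hB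
  let Blk := {a // B.1 a = Sum.inr r}
  let A₀ := relabel e r A 1
  let col (y : Wr G n) (b : Blk) : G := (tabAct y A₀).2 b
  let B₀ (g : Blk → G) := relabel e r B fun a => if h : B.1 a = Sum.inr r then g ⟨a, h⟩ else 1
  have fibre (g : Blk → G) :
      {y : {y // y ∈ Y ∧ tabAct y A = B} // col y = g} ≃ {y // y ∈ Y ∧ tabAct y A₀ = B₀ g} := by
    refine (Equiv.subtypeSubtypeEquivSubtypeInter _ (col · = g)).trans
      (Equiv.subtypeEquivRight fun y => ?_)
    rw [and_assoc, tabAct_relabel_eq_relabel_iff he (hB.2 · r), funext_iff, Subtype.forall]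
    simp +contextual [col, A₀]
  calc Nat.card {y // y ∈ Y ∧ tabAct y A = B}
      = ∑ g : Blk → G, Nat.card {y : {y // y ∈ Y ∧ tabAct y A = B} // col y = g} := by
        rw [← Nat.card_sigma]; exact Nat.card_congr (Equiv.sigmaFiberEquiv _).symm
    _ = ∑ _g : Blk → G, c := by
        refine Finset.sum_congr rfl fun g _ => ?_
        rw [Nat.card_congr (fibre g)]
        exact hY _ (isTabloid_relabel he hsize (isTabloid_iff.2 hA) 1) _
          (isTabloid_relabel he hsize (isTabloid_iff.2 hB) _)
    _ = Nat.card G ^ blockSize σ ρ (Sum.inr r) * c := by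
        rw [Finset.sum_const, Finset.card_univ, smul_eq_mul, ← Nat.card_eq_fintype_card,
          Nat.card_fun, hB.1]

theorem dpDom_cons (G : Type*) [CommGroup G] [Finite G] (n x : ℕ) (σ ρ : Multiset ℕ) :
    DPDom G n (x ::ₘ σ) ρ σ (x ::ₘ ρ) := by
  obtain ⟨rσ, hσ⟩ := exists_dparts_cons x σ
  obtain ⟨rρ, hρ⟩ := exists_dparts_cons x ρ
  exact dpDom_of_relabel (isLeft_moveBlock rσ rρ) (blockSize_moveBlock hσ hρ)

theorem dpDom_add (G : Type*) [CommGroup G] [Finite G] (n : ℕ) (α : Multiset ℕ) :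
    ∀ σ ρ : Multiset ℕ, DPDom G n (σ + α) ρ σ (ρ + α) := by
  induction α using Multiset.induction with
  | empty => exact fun σ ρ Y hY => by simpa using hY
  | cons x β ih =>
    intro σ ρ
    simpa only [Multiset.add_cons, Multiset.cons_add] using
      (ih (x ::ₘ σ) ρ).trans (dpDom_cons G n x σ (ρ + β))

end DoublePartition

theorem union_rule_general (G : Type) [CommGroup G] [Fintype G]
    (σ ρ α : Multiset ℕ) :
    DPDom G (σ.sum + ρ.sum + α.sum) (σ + α) ρ σ (ρ + α) :=
  DoublePartition.dpDom_add G _ α σ ρ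

/-- **Union rule.**
Let `G` be a nontrivial finite abelian group and `(σ,ρ)` a double partition.  Then for
every integer partition `α`, `(σ ∪ α, ρ) ≽_G (σ, ρ ∪ α)`, both being double partitions
of `n = |σ| + |ρ| + |α|`.  (The union of two partitions, i.e. the partition whose
multiset of parts is the union of the two multisets of parts, is the multiset sum.) -/
theorem union_rule (G : Type) [CommGroup G] [Fintype G] [Nontrivial G]
    (σ ρ α : Multiset ℕ) (hσ0 : 0 ∉ σ) (hρ0 : 0 ∉ ρ) (hα0 : 0 ∉ α) :
    DPDom G (σ.sum + ρ.sum + α.sum) (σ + α) ρ σ (ρ + α) :=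
  union_rule_general G σ ρ α
end

section
/- Let r ≥ 1 and n ≥ 1 be integers and, for 0 ≤ i ≤ n, let w_i = #{g ∈ C_r ≀ S_n : θ(g) = i}. Then for all nonnegative integers k and ℓ with k ≠ ℓ and k + ℓ ≤ n, Σ_{i=0}^{n} w_i · C_k^{(1/r)}(i) · C_ℓ^{(1/r)}(i) = 0. -/
/-- `θ(w)`: the number of fixed points of `w` on `C_r × [n]`, divided by `r`. -/
noncomputable def theta {r n : ℕ} (w : Wr (Multiplicative (ZMod r)) n) : ℕ :=
  Nat.card {p : Multiplicative (ZMod r) × Fin n // wAct w p = p} / r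

/-- The Charlier polynomial `C_k^{(a)}(x) = ∑_{j=0}^k (-1)^{k-j} binom(k,j) a^{-j} (x)_j`. -/
noncomputable def charlier (a : ℝ) (k : ℕ) (x : ℝ) : ℝ :=
  ∑ j ∈ Finset.range (k + 1),
    (-1 : ℝ) ^ (k - j) * (k.choose j : ℝ) * a⁻¹ ^ j * ∏ m ∈ Finset.range j, (x - m)

/-- `Y` is a `t`-design in `C_r ≀ Sₙ`: it is transitive on `t`-tuples of elements of
`C_r × [n]` with pairwise distinct second coordinates. -/
def IsTDesign (r n t : ℕ) (Y : Set (Wr (Multiplicative (ZMod r)) n)) : Prop :=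
  IsTransitiveOn (fun w v => fun s => wAct w (v s))
    {v : Fin t → Multiplicative (ZMod r) × Fin n | Function.Injective fun s => (v s).2} Y

/-- `Y` is a `d`-code in `C_r ≀ Sₙ` : `θ(x⁻¹y) ≤ n - d` for all distinct `x, y ∈ Y`. -/
def IsDCode (r n d : ℕ) (Y : Set (Wr (Multiplicative (ZMod r)) n)) : Prop :=
  ∀ x ∈ Y, ∀ y ∈ Y, x ≠ y → (theta (x⁻¹ * y) : ℤ) ≤ (n : ℤ) - d

/-! Counting the `j`-subsets of colour-trivial fixed coordinates shows that the factorial moments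
`∑_g (θ g)_j = n! r^(n-j)`, `j ≤ n`, are those of a Poisson law of mean `1/r` (up to the factor
`n! r^n`). For such moments the Charlier polynomials are orthogonal: for `j < k`, expanding
`(x)_i (x)_j` into falling factorials by Chu–Vandermonde turns `∑_g C_k(θ g) (θ g)_j` into a
`k`-th finite difference of a polynomial of degree `j`, which vanishes. -/

open Finset Polynomial
open scoped Nat

theorem descPochhammer_eval_mul_descPochhammer_eval {R : Type*} [CommRing R] (x : R) (i j : ℕ) :
    (descPochhammer R i).eval x * (descPochhammer R j).eval x =
      ∑ m ∈ range (j + 1),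
        (j.choose m * i.descFactorial m : R) * (descPochhammer R (i + (j - m))).eval x := by
  have hsmeval (k : ℕ) (y : R) :
      (descPochhammer ℤ k).smeval y = (descPochhammer R k).eval y := by
    rw [← aeval_eq_smeval, aeval_def, ← eval_map, descPochhammer_map]
  have hvandermonde :=
    Ring.descPochhammer_smeval_add (r := (i : R)) (s := x - i) j (Commute.all _ _)
  simp only [hsmeval, add_sub_cancel, descPochhammer_eval_eq_descFactorial] at hvandermonde
  rw [hvandermonde, Nat.sum_antidiagonal_eq_sum_range_succ_mk, mul_sum]
  refine sum_congr rfl fun m _ => ?_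
  rw [← descPochhammer_mul, eval_mul, eval_comp]
  simp only [eval_sub, eval_X, eval_natCast]
  ring

theorem sum_range_alternating_choose_mul_eval_eq_zero {R : Type*} [CommRing R] {P : R[X]} {k : ℕ}
    (hP : P.natDegree < k) :
    ∑ i ∈ range (k + 1), (-1) ^ (k - i) * (k.choose i : R) * P.eval (i : R) = 0 := by
  have := congr_fun (fwdDiff_iter_eq_zero_of_degree_lt hP) 0
  simpa [fwdDiff_iter_eq_sum_shift, zsmul_eq_mul] using this

theorem charlier_eq_sum_descPochhammer (a : ℝ) (k : ℕ) (x : ℝ) :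
    charlier a k x = ∑ i ∈ range (k + 1),
      (-1) ^ (k - i) * (k.choose i : ℝ) * a⁻¹ ^ i * (descPochhammer ℝ i).eval x := by
  simp only [charlier, descPochhammer_eval_eq_prod_range]

section FactorialMoments

variable {W : Type*} [Fintype W] {X : W → ℝ} {a c : ℝ} {N : ℕ}

theorem sum_charlier_mul_descPochhammer_eq_zero (ha : a ≠ 0)
    (hmom : ∀ s ≤ N, ∑ w, (descPochhammer ℝ s).eval (X w) = c * a ^ s)
    {k j : ℕ} (hjk : j < k) (hN : k + j ≤ N) :
    ∑ w, charlier a k (X w) * (descPochhammer ℝ j).eval (X w) = 0 := by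
  have hprod (i : ℕ) (hi : i ≤ k) :
      a⁻¹ ^ i * ∑ w, (descPochhammer ℝ i).eval (X w) * (descPochhammer ℝ j).eval (X w) =
        c * ∑ m ∈ range (j + 1),
          j.choose m * a ^ (j - m) * (descPochhammer ℝ m).eval (i : ℝ) := by
    simp_rw [descPochhammer_eval_mul_descPochhammer_eval, sum_comm (s := univ), ← mul_sum]
    rw [mul_sum, mul_sum]
    refine sum_congr rfl fun m hm => ?_
    rw [hmom _ (by grind), descPochhammer_eval_eq_descFactorial, pow_add, inv_pow]
    field_simp
  calc ∑ w, charlier a k (X w) * (descPochhammer ℝ j).eval (X w)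
      = ∑ i ∈ range (k + 1), (-1) ^ (k - i) * (k.choose i : ℝ) *
          (a⁻¹ ^ i *
            ∑ w, (descPochhammer ℝ i).eval (X w) * (descPochhammer ℝ j).eval (X w)) := by
        simp_rw [charlier_eq_sum_descPochhammer, sum_mul, mul_sum]
        rw [sum_comm]
        exact sum_congr rfl fun i _ => sum_congr rfl fun w _ => by ring
    _ = c * ∑ m ∈ range (j + 1), j.choose m * a ^ (j - m) *
          ∑ i ∈ range (k + 1), (-1) ^ (k - i) * (k.choose i : ℝ) *
            (descPochhammer ℝ m).eval (i : ℝ) := by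
        rw [sum_congr rfl fun i hi => by rw [hprod i (by grind)]]
        simp_rw [mul_sum]
        rw [sum_comm]
        exact sum_congr rfl fun m _ => sum_congr rfl fun i _ => by ring
    _ = 0 := by
        refine mul_eq_zero_of_right _ (sum_eq_zero fun m hm => mul_eq_zero_of_right _ ?_)
        refine sum_range_alternating_choose_mul_eval_eq_zero ?_
        rw [descPochhammer_natDegree]
        grind

theorem sum_charlier_mul_charlier_eq_zero (ha : a ≠ 0)
    (hmom : ∀ s ≤ N, ∑ w, (descPochhammer ℝ s).eval (X w) = c * a ^ s)
    {k ℓ : ℕ} (hkl : k ≠ ℓ) (hN : k + ℓ ≤ N) :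
    ∑ w, charlier a k (X w) * charlier a ℓ (X w) = 0 := by
  wlog hlk : ℓ < k generalizing k ℓ
  · simp_rw [mul_comm (charlier a k _)]
    exact this hkl.symm (by omega) (by omega)
  simp_rw [charlier_eq_sum_descPochhammer a ℓ, mul_sum, sum_comm (s := univ)]
  refine sum_eq_zero fun j hj => ?_
  simp_rw [mul_left_comm (charlier a k _), ← mul_sum]
  rw [sum_charlier_mul_descPochhammer_eq_zero ha hmom (by grind) (by grind), mul_zero]

end FactorialMoments

instance {N G : Type*} [Group N] [Group G] {f : G →* MulAut N} [Fintype N] [Fintype G] :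
    Fintype (SemidirectProduct N G f) :=
  Fintype.ofEquiv _ SemidirectProduct.equivProd.symm

theorem Equiv.Perm.card_fixing_pointwise {α : Type*} [Fintype α] [DecidableEq α]
    (T : Finset α) :
    Nat.card {π : Equiv.Perm α // ∀ i ∈ T, π i = i} = (Fintype.card α - #T)! := by
  have e : Equiv.Perm {a // a ∉ T} ≃ {π : Equiv.Perm α // ∀ i ∈ T, π i = i} :=
    (Equiv.Perm.subtypeEquivSubtypePerm (· ∉ T)).trans
      (Equiv.subtypeEquivRight fun π => by simp only [not_not])
  rw [← Nat.card_congr e, Nat.card_perm, Nat.card_eq_fintype_card, Fintype.card_subtype_compl,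
    Fintype.card_coe]

theorem card_fun_eq_one_on_finset {α G : Type*} [Fintype α] [DecidableEq α] [One G]
    (T : Finset α) :
    Nat.card {f : α → G // ∀ i ∈ T, f i = 1} = Nat.card G ^ (Fintype.card α - #T) := by
  have e : {f : α → G // ∀ i ∈ T, f i = 1} ≃ ({a // a ∉ T} → G) :=
    (Equiv.subtypeEquivRight fun f => by simp [funext_iff]).trans
      (Equiv.subtypePreimage (· ∈ T) (fun _ => (1 : G)))
  rw [Nat.card_congr e, Nat.card_fun, Nat.card_eq_fintype_card (α := {a // a ∉ T}),
    Fintype.card_subtype_compl, Fintype.card_coe]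

section WreathProduct

variable {G : Type*} [CommGroup G] [DecidableEq G] {n : ℕ}

def fixedCoords (g : Wr G n) : Finset (Fin n) := {i | g.right i = i ∧ g.left i = 1}

theorem wAct_eq_self_iff (g : Wr G n) (p : G × Fin n) :
    wAct g p = p ↔ p.2 ∈ fixedCoords g := by
  simp only [wAct, Prod.ext_iff, _root_.mul_eq_left, fixedCoords, mem_filter, mem_univ, true_and]
  grind

theorem card_fixedPoints_wAct [Fintype G] (g : Wr G n) :
    Nat.card {p : G × Fin n // wAct g p = p} = Fintype.card G * #(fixedCoords g) := by
  have : ({p | wAct g p = p} : Finset (G × Fin n)) = univ ×ˢ fixedCoords g := by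
    ext p; simp [wAct_eq_self_iff]
  rw [Nat.card_eq_fintype_card, Fintype.card_subtype, this, card_product, Finset.card_univ]

theorem theta_eq_card_fixedCoords {r : ℕ} [NeZero r] (g : Wr (Multiplicative (ZMod r)) n) :
    theta g = #(fixedCoords g) := by
  rw [theta, card_fixedPoints_wAct, Fintype.card_multiplicative, ZMod.card,
    Nat.mul_div_cancel_left _ (NeZero.pos r)]

theorem card_fixedCoords_le (g : Wr G n) : #(fixedCoords g) ≤ n :=
  (card_le_univ _).trans_eq (Fintype.card_fin n)

variable [Fintype G]

theorem card_subset_fixedCoords (T : Finset (Fin n)) :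
    Nat.card {g : Wr G n // T ⊆ fixedCoords g} = (n - #T)! * Fintype.card G ^ (n - #T) := by
  have e : {g : Wr G n // T ⊆ fixedCoords g} ≃
      {π : Equiv.Perm (Fin n) // ∀ i ∈ T, π i = i} ×
        {f : Fin n → G // ∀ i ∈ T, f i = 1} :=
    { toFun g := (⟨g.1.right, fun i hi => (mem_filter.1 (g.2 hi)).2.1⟩,
        ⟨g.1.left, fun i hi => (mem_filter.1 (g.2 hi)).2.2⟩)
      invFun p :=
        ⟨⟨p.2.1, p.1.1⟩, fun i hi => mem_filter.2 ⟨mem_univ i, p.1.2 i hi, p.2.2 i hi⟩⟩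
      left_inv _ := rfl
      right_inv _ := rfl }
  rw [Nat.card_congr e, Nat.card_prod, Equiv.Perm.card_fixing_pointwise, card_fun_eq_one_on_finset,
    Fintype.card_fin, Nat.card_eq_fintype_card]

theorem sum_choose_card_fixedCoords (j : ℕ) :
    ∑ g : Wr G n, (#(fixedCoords g)).choose j =
      n.choose j * ((n - j)! * Fintype.card G ^ (n - j)) := by
  have hfiber (g : Wr G n) :
      #((powersetCard j univ).filter (· ⊆ fixedCoords g)) = (#(fixedCoords g)).choose j := by
    rw [← card_powersetCard]
    congr 1
    ext T
    simp [mem_powersetCard, and_comm]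
  calc ∑ g : Wr G n, (#(fixedCoords g)).choose j
      = ∑ g : Wr G n,
          #((powersetCard j univ).bipartiteAbove (fun g T => T ⊆ fixedCoords g) g) := by
        simp_rw [bipartiteAbove, hfiber]
    _ = ∑ T ∈ powersetCard j univ, #(univ.bipartiteBelow (fun g T => T ⊆ fixedCoords g) T) :=
        sum_card_bipartiteAbove_eq_sum_card_bipartiteBelow _
    _ = ∑ T ∈ powersetCard j (univ : Finset (Fin n)), (n - j)! * Fintype.card G ^ (n - j) := by
        refine sum_congr rfl fun T hT => ?_
        rw [bipartiteBelow, ← Fintype.card_subtype, ← Nat.card_eq_fintype_card,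
          card_subset_fixedCoords, (mem_powersetCard.1 hT).2]
    _ = n.choose j * ((n - j)! * Fintype.card G ^ (n - j)) := by
        rw [sum_const, card_powersetCard, Finset.card_univ, Fintype.card_fin, smul_eq_mul]

theorem sum_descFactorial_card_fixedCoords {j : ℕ} (hj : j ≤ n) :
    ∑ g : Wr G n, (#(fixedCoords g)).descFactorial j = n ! * Fintype.card G ^ (n - j) := by
  simp_rw [Nat.descFactorial_eq_factorial_mul_choose, ← mul_sum, sum_choose_card_fixedCoords,
    ← Nat.choose_mul_factorial_mul_factorial hj]
  ring

end WreathProduct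

theorem sum_descPochhammer_theta {r n s : ℕ} [NeZero r] (hs : s ≤ n) :
    ∑ g : Wr (Multiplicative (ZMod r)) n, (descPochhammer ℝ s).eval (theta g : ℝ) =
      (n ! * r ^ n : ℝ) * (1 / r : ℝ) ^ s := by
  simp_rw [descPochhammer_eval_eq_descFactorial, theta_eq_card_fixedCoords, ← Nat.cast_sum,
    sum_descFactorial_card_fixedCoords hs, Fintype.card_multiplicative, ZMod.card]
  have hr : (r : ℝ) ≠ 0 := NeZero.ne _
  rw [Nat.cast_mul, Nat.cast_pow, pow_sub₀ _ hr hs]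
  ring

theorem sum_range_card_fiber_mul {W R : Type*} [Fintype W] [Semiring R] (θ : W → ℕ) {n : ℕ}
    (hθ : ∀ w, θ w ≤ n) (F : ℕ → R) :
    ∑ i ∈ range (n + 1), (Nat.card {w // θ w = i} : R) * F i = ∑ w, F (θ w) := by
  classical
  rw [← sum_fiberwise_of_maps_to (fun w _ => mem_range.2 (Nat.lt_succ_of_le (hθ w)))]
  refine sum_congr rfl fun i _ => ?_
  rw [sum_congr rfl fun w hw => by rw [(mem_filter.1 hw).2], sum_const, Nat.card_eq_fintype_card,
    Fintype.card_subtype, nsmul_eq_mul]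

theorem charlier_orthogonality_general (r n : ℕ) (hr : 1 ≤ r)
    (k ℓ : ℕ) (hkl : k ≠ ℓ) (hsum : k + ℓ ≤ n) :
    ∑ i ∈ Finset.range (n + 1),
      (Nat.card {g : Wr (Multiplicative (ZMod r)) n // theta g = i} : ℝ) *
        charlier (1 / r) k i * charlier (1 / r) ℓ i = 0 := by
  have : NeZero r := ⟨by omega⟩
  have htheta_le (g : Wr (Multiplicative (ZMod r)) n) : theta g ≤ n :=
    theta_eq_card_fixedCoords g ▸ card_fixedCoords_le g
  simp_rw [mul_assoc]
  rw [sum_range_card_fiber_mul theta htheta_le]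
  exact sum_charlier_mul_charlier_eq_zero (one_div_ne_zero (NeZero.ne _))
    (fun _ hs => sum_descPochhammer_theta hs) hkl hsum

/-- **Orthogonality of Charlier polynomials w.r.t. the fixed-point distribution.**
Let `r, n ≥ 1` and, for `0 ≤ i ≤ n`, let `wᵢ` be the number of elements `g` of
`C_r ≀ Sₙ` with `θ(g) = i`.  Then for all `k ≠ ℓ` with `k + ℓ ≤ n`,
`∑_{i=0}^n wᵢ C_k^{(1/r)}(i) C_ℓ^{(1/r)}(i) = 0`. -/
theorem charlier_orthogonality (r n : ℕ) (hr : 1 ≤ r) (hn : 1 ≤ n)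
    (k ℓ : ℕ) (hkl : k ≠ ℓ) (hsum : k + ℓ ≤ n) :
    ∑ i ∈ Finset.range (n + 1),
      (Nat.card {g : Wr (Multiplicative (ZMod r)) n // theta g = i} : ℝ) *
        charlier (1 / r) k i * charlier (1 / r) ℓ i = 0 :=
  charlier_orthogonality_general r n hr k ℓ hkl hsum
end

section
/- Let r ≥ 1, n ≥ 1 and 1 ≤ t ≤ n be integers. Let Y be a t-design in S_n (a nonempty subset of S_n transitive on the set of t-tuples of pairwise distinct elements of {1,…,n}) and let D ⊆ C_r^n be an orthogonal array of strength t. Then the subset {(g, y) : g ∈ D, y ∈ Y} of C_r ≀ S_n is a t-design in C_r ≀ S_n. -/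
/-- `Y` is a `t`-design in `Sₙ`: it is transitive on `t`-tuples of pairwise distinct
elements of `[n]`. -/
def IsSnTDesign (n t : ℕ) (Y : Set (Equiv.Perm (Fin n))) : Prop :=
  IsTransitiveOn (fun π v => fun s => π (v s))
    {v : Fin t → Fin n | Function.Injective v} Y

/-- `D ⊆ C_r^n` is an orthogonal array of strength `t`: `D` is nonempty and for every
choice of `t` distinct coordinates and every tuple of values, the number of rows of `D`
agreeing with these values on the chosen coordinates is `|D|/r^t`. -/
def IsOA (r n t : ℕ) (D : Set (Fin n → Multiplicative (ZMod r))) : Prop :=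
  D.Nonempty ∧
  ∀ idx : Fin t → Fin n, Function.Injective idx →
    ∀ c : Fin t → Multiplicative (ZMod r),
      Nat.card {d : Fin n → Multiplicative (ZMod r) //
        d ∈ D ∧ ∀ s, d (idx s) = c s} * r ^ t = Nat.card D

/-- **Product construction of `t`-designs in `C_r ≀ Sₙ`.**
Let `r, n ≥ 1` and `1 ≤ t ≤ n`.  If `Y` is a `t`-design in `Sₙ` and `D ⊆ C_r^n` is an
orthogonal array of strength `t`, then `{(g, y) : g ∈ D, y ∈ Y}` is a `t`-design in
`C_r ≀ Sₙ`. -/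
theorem product_construction (r n t : ℕ) (hr : 1 ≤ r) (hn : 1 ≤ n) (ht1 : 1 ≤ t) (htn : t ≤ n)
    (Y : Set (Equiv.Perm (Fin n))) (hY : Y.Nonempty) (hYdesign : IsSnTDesign n t Y)
    (D : Set (Fin n → Multiplicative (ZMod r))) (hD : IsOA r n t D) :
    IsTDesign r n t {w : Wr (Multiplicative (ZMod r)) n | w.left ∈ D ∧ w.right ∈ Y} := by
  haveI : NeZero r := ⟨by omega⟩
  obtain ⟨c, hc, hcY⟩ := hYdesign
  have hrt : 0 < r ^ t := pow_pos (by omega) t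
  haveI := hD.1.to_subtype
  have hDcard : 0 < Nat.card D := Nat.card_pos
  -- the OA constant
  have hm : 0 < Nat.card D / r ^ t := by
    obtain ⟨d0, hd0⟩ := hD.1
    have hinj : Function.Injective (Fin.castLE htn) := Fin.castLE_injective htn
    have h := hD.2 (Fin.castLE htn) hinj (fun s => d0 (Fin.castLE htn s))
    have hdiv : Nat.card D / r ^ t =
        Nat.card {d : Fin n → Multiplicative (ZMod r) //
          d ∈ D ∧ ∀ s, d (Fin.castLE htn s) = d0 (Fin.castLE htn s)} :=
      (Nat.div_eq_of_eq_mul_left hrt h.symm)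
    rw [hdiv]
    haveI : Nonempty {d : Fin n → Multiplicative (ZMod r) //
        d ∈ D ∧ ∀ s, d (Fin.castLE htn s) = d0 (Fin.castLE htn s)} :=
      ⟨⟨d0, hd0, fun s => rfl⟩⟩
    exact Nat.card_pos
  refine ⟨c * (Nat.card D / r ^ t), Nat.mul_pos hc hm, ?_⟩
  intro a ha b hb
  have hiff : ∀ w : Wr (Multiplicative (ZMod r)) n,
      ((fun s => wAct w (a s)) = b) ↔
      (((fun s => w.right ((a s).2)) = fun s => (b s).2) ∧
       ∀ s, w.left ((b s).2) = ((a s).1)⁻¹ * (b s).1) := by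
    intro w
    constructor
    · intro h
      have h2 : ∀ s, w.right ((a s).2) = (b s).2 := fun s =>
        congrArg Prod.snd (congrFun h s)
      refine ⟨funext h2, fun s => ?_⟩
      have h1 : (a s).1 * w.left (w.right ((a s).2)) = (b s).1 :=
        congrArg Prod.fst (congrFun h s)
      rw [h2 s] at h1
      rw [← h1]
      group
    · rintro ⟨h2, h1⟩
      funext s
      have hs2 := congrFun h2 s
      have : wAct w (a s) = ((a s).1 * w.left (w.right ((a s).2)), w.right ((a s).2)) := rfl
      rw [this, hs2, h1 s]
      exact Prod.ext (by group) rfl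
  have key : Nat.card {w : Wr (Multiplicative (ZMod r)) n //
      w ∈ {w : Wr (Multiplicative (ZMod r)) n | w.left ∈ D ∧ w.right ∈ Y} ∧
        (fun s => wAct w (a s)) = b}
      = Nat.card {π : Equiv.Perm (Fin n) // π ∈ Y ∧
            (fun s => π ((a s).2)) = fun s => (b s).2}
        * Nat.card {d : Fin n → Multiplicative (ZMod r) //
            d ∈ D ∧ ∀ s, d ((b s).2) = ((a s).1)⁻¹ * (b s).1} := by
    rw [← Nat.card_prod]
    refine Nat.card_congr
      ⟨fun w => (⟨w.1.right, w.2.1.2, ((hiff w.1).mp w.2.2).1⟩,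
                 ⟨w.1.left, w.2.1.1, ((hiff w.1).mp w.2.2).2⟩),
       fun p => ⟨⟨p.2.1, p.1.1⟩, ⟨p.2.2.1, p.1.2.1⟩,
                 (hiff ⟨p.2.1, p.1.1⟩).mpr ⟨p.1.2.2, p.2.2.2⟩⟩,
       fun w => ?_, fun p => ?_⟩
    · exact Subtype.ext rfl
    · exact Prod.ext (Subtype.ext rfl) (Subtype.ext rfl)
  rw [key]
  have hπ : Nat.card {π : Equiv.Perm (Fin n) // π ∈ Y ∧
      (fun s => π ((a s).2)) = fun s => (b s).2} = c :=
    hcY (fun s => (a s).2) ha (fun s => (b s).2) hb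
  have hd : Nat.card {d : Fin n → Multiplicative (ZMod r) //
      d ∈ D ∧ ∀ s, d ((b s).2) = ((a s).1)⁻¹ * (b s).1} = Nat.card D / r ^ t := by
    have h := hD.2 (fun s => (b s).2) hb (fun s => ((a s).1)⁻¹ * (b s).1)
    exact ((Nat.div_eq_of_eq_mul_left hrt h.symm)).symm
  rw [hπ, hd]
end
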